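/- Let f : ℍ → ℍ be of class C² on an open set Ω of quaternions with nonzero imaginary part, of the form f(p) = u(p) + ι(p)·v(p) with u, v real-valued, and suppose D_l f = −2v/r on Ω. Then the real-valued function p ↦ v(p)/r is harmonic on Ω, i.e. Δ(v/r) = 0. -/

import Mathlib

/-!
On `Ω` the imaginary part of `f` is `G • im`, where `G q = ⟪im q, im (f q)⟫ / ‖im q‖²` is a `C²`
function agreeing with `v / r`. Since `D̄_l D_l = Δ` on `C²` functions and `D_l f = -2G`, the
imaginary part of `Δf` is that of `D̄_l (-2G)`, namely `2 ∇ₓG`, the spatial gradient of `G` read as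
an imaginary quaternion. The Leibniz rule gives `im (Δf) = Δ(G • im) = ΔG • im + 2 ∇ₓG` instead, so
`ΔG • im p = 0`, and `im p ≠ 0` forces `ΔG = 0`.
-/

open Quaternion

noncomputable section

/-- The basis quaternion `i`. -/
def qi : ℍ[ℝ] := ⟨0,1,0,0⟩
/-- The basis quaternion `j`. -/
def qj : ℍ[ℝ] := ⟨0,0,1,0⟩
/-- The basis quaternion `k`. -/
def qk : ℍ[ℝ] := ⟨0,0,0,1⟩

/-- Partial derivative of `f : ℍ → ℍ` in the real (`t`) direction. -/
def pt (f : ℍ[ℝ] → ℍ[ℝ]) (p : ℍ[ℝ]) : ℍ[ℝ] := fderiv ℝ f p 1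
/-- Partial derivative in the `i` (`x`) direction. -/
def px (f : ℍ[ℝ] → ℍ[ℝ]) (p : ℍ[ℝ]) : ℍ[ℝ] := fderiv ℝ f p qi
/-- Partial derivative in the `j` (`y`) direction. -/
def py (f : ℍ[ℝ] → ℍ[ℝ]) (p : ℍ[ℝ]) : ℍ[ℝ] := fderiv ℝ f p qj
/-- Partial derivative in the `k` (`z`) direction. -/
def pz (f : ℍ[ℝ] → ℍ[ℝ]) (p : ℍ[ℝ]) : ℍ[ℝ] := fderiv ℝ f p qk

/-- The left Fueter operator `D_l f = ∂f/∂t + i ∂f/∂x + j ∂f/∂y + k ∂f/∂z`. -/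
def Dl (f : ℍ[ℝ] → ℍ[ℝ]) (p : ℍ[ℝ]) : ℍ[ℝ] :=
  pt f p + qi * px f p + qj * py f p + qk * pz f p
/-- The right Fueter operator `D_r f = ∂f/∂t + (∂f/∂x) i + (∂f/∂y) j + (∂f/∂z) k`. -/
def Dr (f : ℍ[ℝ] → ℍ[ℝ]) (p : ℍ[ℝ]) : ℍ[ℝ] :=
  pt f p + px f p * qi + py f p * qj + pz f p * qk
/-- The conjugate left Fueter operator `D̄_l f = ∂f/∂t - i ∂f/∂x - j ∂f/∂y - k ∂f/∂z`. -/
def Dlbar (f : ℍ[ℝ] → ℍ[ℝ]) (p : ℍ[ℝ]) : ℍ[ℝ] :=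
  pt f p - qi * px f p - qj * py f p - qk * pz f p
/-- The Laplacian `Δf = ∂²f/∂t² + ∂²f/∂x² + ∂²f/∂y² + ∂²f/∂z²`. -/
def Lap (f : ℍ[ℝ] → ℍ[ℝ]) (p : ℍ[ℝ]) : ℍ[ℝ] :=
  pt (pt f) p + px (px f) p + py (py f) p + pz (pz f) p

/-- `r = √(x² + y² + z²)`, the norm of the imaginary part of `p`. -/
def rad (p : ℍ[ℝ]) : ℝ := Real.sqrt (p.imI^2 + p.imJ^2 + p.imK^2)
/-- `ι(p) = (x i + y j + z k)/r`, the normalized imaginary part of `p`. -/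
def iot (p : ℍ[ℝ]) : ℍ[ℝ] := (rad p)⁻¹ • Quaternion.im p

open Quaternion Filter Topology

section SecondDirectionalDerivative

variable {E F F' : Type*} [NormedAddCommGroup E] [NormedSpace ℝ E]
  [NormedAddCommGroup F] [NormedSpace ℝ F] [NormedAddCommGroup F'] [NormedSpace ℝ F']
  {f g : E → F} {p : E}

def sndDirDeriv (f : E → F) (p a b : E) : F := fderiv ℝ (fun q => fderiv ℝ f q b) p a

theorem ContinuousLinearMap.fderiv_comp_apply (L : F →L[ℝ] F') (hf : DifferentiableAt ℝ f p)
    (a : E) : fderiv ℝ (fun q => L (f q)) p a = L (fderiv ℝ f p a) := by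
  change fderiv ℝ (L ∘ f) p a = _
  rw [fderiv_comp p L.differentiableAt hf, L.fderiv]
  rfl

theorem Filter.EventuallyEq.sndDirDeriv_eq (h : f =ᶠ[𝓝 p] g) (a b : E) :
    sndDirDeriv f p a b = sndDirDeriv g p a b := by
  have hb : (fun q => fderiv ℝ f q b) =ᶠ[𝓝 p] fun q => fderiv ℝ g q b :=
    (h.fderiv (𝕜 := ℝ)).mono fun q hq => congrArg (fun L => L b) hq
  rw [sndDirDeriv, sndDirDeriv, hb.fderiv_eq]

theorem ContDiffAt.differentiableAt_fderiv_apply (hf : ContDiffAt ℝ 2 f p) (b : E) :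
    DifferentiableAt ℝ (fun q => fderiv ℝ f q b) p :=
  ((hf.fderiv_right (m := 1) le_rfl).differentiableAt one_ne_zero).clm_apply
    (differentiableAt_const b)

theorem ContDiffAt.sndDirDeriv_eq_fderiv_fderiv (hf : ContDiffAt ℝ 2 f p) (a b : E) :
    sndDirDeriv f p a b = fderiv ℝ (fderiv ℝ f) p a b := by
  have hd : DifferentiableAt ℝ (fderiv ℝ f) p :=
    (hf.fderiv_right (m := 1) le_rfl).differentiableAt one_ne_zero
  rw [sndDirDeriv, fderiv_clm_apply hd (differentiableAt_const b)]
  simp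

theorem ContDiffAt.sndDirDeriv_comm (hf : ContDiffAt ℝ 2 f p) (a b : E) :
    sndDirDeriv f p a b = sndDirDeriv f p b a := by
  rw [hf.sndDirDeriv_eq_fderiv_fderiv, hf.sndDirDeriv_eq_fderiv_fderiv]
  exact hf.isSymmSndFDerivAt (by simp [minSmoothness_of_isRCLikeNormedField]) a b

theorem ContDiffAt.sndDirDeriv_clm_comp (L : F →L[ℝ] F') (hf : ContDiffAt ℝ 2 f p) (a b : E) :
    sndDirDeriv (fun q => L (f q)) p a b = L (sndDirDeriv f p a b) := by
  have hfd : (fun q => fderiv ℝ (fun q => L (f q)) q b) =ᶠ[𝓝 p]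
      fun q => L (fderiv ℝ f q b) := by
    filter_upwards [hf.eventually (by simp)] with q hq
    exact L.fderiv_comp_apply (hq.differentiableAt two_ne_zero) b
  rw [sndDirDeriv, hfd.fderiv_eq, L.fderiv_comp_apply (hf.differentiableAt_fderiv_apply b)]
  rfl

theorem ContDiffAt.sndDirDeriv_smul_clm {G : E → ℝ} (hG : ContDiffAt ℝ 2 G p) (L : E →L[ℝ] F)
    (a b : E) :
    sndDirDeriv (fun q => G q • L q) p a b =
      sndDirDeriv G p a b • L p + fderiv ℝ G p b • L a + fderiv ℝ G p a • L b := by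
  have hfd : (fun q => fderiv ℝ (fun q => G q • L q) q b) =ᶠ[𝓝 p]
      fun q => fderiv ℝ G q b • L q + G q • L b := by
    filter_upwards [hG.eventually (by simp)] with q hq
    rw [fderiv_fun_smul (hq.differentiableAt two_ne_zero) L.differentiableAt]
    simp only [L.fderiv, add_apply, smul_apply, ContinuousLinearMap.smulRight_apply]
    abel
  have hd₁ : DifferentiableAt ℝ (fun q => fderiv ℝ G q b • L q) p :=
    (hG.differentiableAt_fderiv_apply b).smul L.differentiableAt
  have hd₂ : DifferentiableAt ℝ (fun q => G q • L b) p :=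
    (hG.differentiableAt two_ne_zero).smul_const (L b)
  rw [sndDirDeriv, hfd.fderiv_eq, fderiv_fun_add hd₁ hd₂,
    fderiv_fun_smul (hG.differentiableAt_fderiv_apply b) L.differentiableAt,
    fderiv_smul_const (hG.differentiableAt two_ne_zero)]
  simp only [L.fderiv, add_apply, smul_apply, ContinuousLinearMap.smulRight_apply, sndDirDeriv]
  abel

end SecondDirectionalDerivative

theorem qi_mul_qi : qi * qi = -1 := by
  ext <;> simp only [re_mul, imI_mul, imJ_mul, imK_mul] <;> simp [qi]
theorem qj_mul_qj : qj * qj = -1 := by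
  ext <;> simp only [re_mul, imI_mul, imJ_mul, imK_mul] <;> simp [qj]
theorem qk_mul_qk : qk * qk = -1 := by
  ext <;> simp only [re_mul, imI_mul, imJ_mul, imK_mul] <;> simp [qk]
theorem qi_mul_qj : qi * qj = qk := by
  ext <;> simp only [re_mul, imI_mul, imJ_mul, imK_mul] <;> simp [qi, qj, qk]
theorem qj_mul_qi : qj * qi = -qk := by
  ext <;> simp only [re_mul, imI_mul, imJ_mul, imK_mul, re_neg, imI_neg, imJ_neg, imK_neg] <;>
    simp [qi, qj, qk]
theorem qj_mul_qk : qj * qk = qi := by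
  ext <;> simp only [re_mul, imI_mul, imJ_mul, imK_mul] <;> simp [qi, qj, qk]
theorem qk_mul_qj : qk * qj = -qi := by
  ext <;> simp only [re_mul, imI_mul, imJ_mul, imK_mul, re_neg, imI_neg, imJ_neg, imK_neg] <;>
    simp [qi, qj, qk]
theorem qk_mul_qi : qk * qi = qj := by
  ext <;> simp only [re_mul, imI_mul, imJ_mul, imK_mul] <;> simp [qi, qj, qk]
theorem qi_mul_qk : qi * qk = -qj := by
  ext <;> simp only [re_mul, imI_mul, imJ_mul, imK_mul, re_neg, imI_neg, imJ_neg, imK_neg] <;>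
    simp [qi, qj, qk]

def imCLM : ℍ[ℝ] →L[ℝ] ℍ[ℝ] :=
  LinearMap.toContinuousLinearMap
    { toFun := Quaternion.im
      map_add' := Quaternion.im_add
      map_smul' := fun c q => Quaternion.im_smul q c }

theorem imCLM_apply (q : ℍ[ℝ]) : imCLM q = im q := rfl

theorem im_qi : im qi = qi := rfl
theorem im_qj : im qj = qj := rfl
theorem im_qk : im qk = qk := rfl

section QuaternionicCalculus

variable {F : Type*} [NormedAddCommGroup F] [NormedSpace ℝ F] {p : ℍ[ℝ]} {f : ℍ[ℝ] → ℍ[ℝ]}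

def quatLaplacian (s : ℍ[ℝ] → F) (p : ℍ[ℝ]) : F :=
  sndDirDeriv s p 1 1 + sndDirDeriv s p qi qi + sndDirDeriv s p qj qj + sndDirDeriv s p qk qk

theorem Lap_eq_quatLaplacian (f : ℍ[ℝ] → ℍ[ℝ]) : Lap f = quatLaplacian f := rfl

theorem Filter.EventuallyEq.quatLaplacian_eq {s t : ℍ[ℝ] → F} (h : s =ᶠ[𝓝 p] t) :
    quatLaplacian s p = quatLaplacian t p := by
  simp only [quatLaplacian, h.sndDirDeriv_eq]

theorem ContDiffAt.quatLaplacian_clm_comp {F' : Type*} [NormedAddCommGroup F'] [NormedSpace ℝ F']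
    {s : ℍ[ℝ] → F} (L : F →L[ℝ] F') (hs : ContDiffAt ℝ 2 s p) :
    quatLaplacian (fun q => L (s q)) p = L (quatLaplacian s p) := by
  simp only [quatLaplacian, hs.sndDirDeriv_clm_comp, map_add]

def imGrad (s : ℍ[ℝ] → ℝ) (p : ℍ[ℝ]) : ℍ[ℝ] :=
  fderiv ℝ s p qi • qi + fderiv ℝ s p qj • qj + fderiv ℝ s p qk • qk

theorem imGrad_const_mul {s : ℍ[ℝ] → ℝ} (hs : DifferentiableAt ℝ s p) (c : ℝ) :
    imGrad (fun q => c * s q) p = c • imGrad s p := by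
  simp only [imGrad, fderiv_const_mul hs, smul_apply, smul_eq_mul, smul_add, mul_smul]

theorem ContDiffAt.quatLaplacian_smul_im {G : ℍ[ℝ] → ℝ} (hG : ContDiffAt ℝ 2 G p) :
    quatLaplacian (fun q => G q • im q) p = quatLaplacian G p • im p + (2 : ℝ) • imGrad G p := by
  simp only [quatLaplacian, ← imCLM_apply, hG.sndDirDeriv_smul_clm]
  simp only [imCLM_apply, im_one, im_qi, im_qj, im_qk, imGrad]
  module

theorem Filter.EventuallyEq.Dlbar_eq {g : ℍ[ℝ] → ℍ[ℝ]} (h : f =ᶠ[𝓝 p] g) :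
    Dlbar f p = Dlbar g p := by
  simp only [Dlbar, pt, px, py, pz, h.fderiv_eq]

theorem im_Dlbar_ofReal {s : ℍ[ℝ] → ℝ} (hs : DifferentiableAt ℝ s p) :
    im (Dlbar (fun q => (s q : ℍ[ℝ])) p) = -imGrad s p := by
  have hcoe : ∀ e, fderiv ℝ (fun q => (s q : ℍ[ℝ])) p e = (fderiv ℝ s p e : ℍ[ℝ]) :=
    (algebraMapCLM ℝ ℍ[ℝ]).fderiv_comp_apply hs
  simp only [Dlbar, pt, px, py, pz, hcoe, mul_coe_eq_smul, im_sub, im_coe, im_smul, imGrad,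
    im_qi, im_qj, im_qk]
  abel

theorem Dlbar_Dl_eq_Lap (hf : ContDiffAt ℝ 2 f p) :
    Dlbar (Dl f) p = Lap f p := by
  have hd := hf.differentiableAt_fderiv_apply
  have hDl : ∀ a, fderiv ℝ (Dl f) p a = sndDirDeriv f p a 1 + qi * sndDirDeriv f p a qi
      + qj * sndDirDeriv f p a qj + qk * sndDirDeriv f p a qk := by
    intro a
    have H := (((hd 1).hasFDerivAt.add ((hd qi).hasFDerivAt.const_mul qi)).add
      ((hd qj).hasFDerivAt.const_mul qj)).add ((hd qk).hasFDerivAt.const_mul qk)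
    rw [HasFDerivAt.fderiv (f := Dl f) H]
    simp only [add_apply, smul_apply, smul_eq_mul, sndDirDeriv]
  -- mixed partials commute while `i, j, k` anticommute, so the cross terms cancel
  simp only [Dlbar, pt, px, py, pz, hDl, Lap_eq_quatLaplacian, quatLaplacian,
    hf.sndDirDeriv_comm qi 1, hf.sndDirDeriv_comm qj 1, hf.sndDirDeriv_comm qk 1,
    hf.sndDirDeriv_comm qj qi, hf.sndDirDeriv_comm qk qi, hf.sndDirDeriv_comm qk qj,
    mul_add, ← mul_assoc, qi_mul_qi, qi_mul_qj, qi_mul_qk, qj_mul_qi, qj_mul_qj, qj_mul_qk,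
    qk_mul_qi, qk_mul_qj, qk_mul_qk, neg_mul, one_mul]
  abel

theorem quatLaplacian_eq_zero_of_Dl_eq {G : ℍ[ℝ] → ℝ} (hf : ContDiffAt ℝ 2 f p)
    (hG : ContDiffAt ℝ 2 G p) (hp : im p ≠ 0)
    (him : (fun q => im (f q)) =ᶠ[𝓝 p] fun q => G q • im q)
    (hDl : Dl f =ᶠ[𝓝 p] fun q => ((-2 * G q : ℝ) : ℍ[ℝ])) :
    quatLaplacian G p = 0 := by
  have hLap : im (Lap f p) = quatLaplacian G p • im p + (2 : ℝ) • imGrad G p := by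
    rw [Lap_eq_quatLaplacian, ← imCLM_apply, ← hf.quatLaplacian_clm_comp]
    exact him.quatLaplacian_eq.trans hG.quatLaplacian_smul_im
  have hDlbar : im (Lap f p) = (2 : ℝ) • imGrad G p := by
    have hG' := hG.differentiableAt two_ne_zero
    rw [← Dlbar_Dl_eq_Lap hf, hDl.Dlbar_eq, im_Dlbar_ofReal (hG'.const_mul _), imGrad_const_mul hG']
    module
  have hsmul : quatLaplacian G p • im p = 0 := by
    simpa using hLap.symm.trans hDlbar
  exact (smul_eq_zero.mp hsmul).resolve_right hp

theorem im_ofReal_add_iot_mul_ofReal (p : ℍ[ℝ]) (a b : ℝ) :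
    im ((a : ℍ[ℝ]) + iot p * (b : ℍ[ℝ])) = (b / rad p) • im p := by
  rw [im_add, im_coe, zero_add, iot, mul_coe_eq_smul, smul_smul, im_smul, im_idem,
    div_eq_mul_inv]

/-- The coefficient `c` in `im (f q) = c • im q`, written so as to be as smooth as `f` away from
the real axis. -/
def imCoeff (f : ℍ[ℝ] → ℍ[ℝ]) (q : ℍ[ℝ]) : ℝ := inner ℝ (im q) (im (f q)) / ‖im q‖ ^ 2

theorem imCoeff_eq_of_im_eq_smul {q : ℍ[ℝ]} {c : ℝ} (hq : im q ≠ 0)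
    (h : im (f q) = c • im q) : imCoeff f q = c := by
  rw [imCoeff, h, real_inner_smul_right, real_inner_self_eq_norm_sq, mul_div_assoc,
    div_self (pow_ne_zero 2 (norm_ne_zero_iff.mpr hq)), mul_one]

theorem ContDiffAt.imCoeff {n : WithTop ℕ∞} (hf : ContDiffAt ℝ n f p) (hp : im p ≠ 0) :
    ContDiffAt ℝ n (imCoeff f) p :=
  (imCLM.contDiff.contDiffAt.inner ℝ (imCLM.contDiff.contDiffAt.comp p hf)).div
    (imCLM.contDiff.contDiffAt.norm_sq ℝ) (pow_ne_zero 2 (norm_ne_zero_iff.mpr hp))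

end QuaternionicCalculus

/-- If `f` is `C²` on an open set `Ω` of quaternions with nonzero imaginary
part, has the form `f = u + ι v` with `u, v` real-valued, and satisfies `D_l f = -2v/r` on `Ω`,
then `v/r` is harmonic on `Ω`. -/
theorem v_over_r_harmonic (Ω : Set ℍ[ℝ]) (hΩ : IsOpen Ω)
    (hΩim : ∀ p ∈ Ω, Quaternion.im p ≠ 0)
    (f : ℍ[ℝ] → ℍ[ℝ]) (hf : ContDiffOn ℝ 2 f Ω)
    (u v : ℍ[ℝ] → ℝ)
    (hform : ∀ p ∈ Ω, f p = (u p : ℍ[ℝ]) + iot p * (v p : ℍ[ℝ]))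
    (hDl : ∀ p ∈ Ω, Dl f p = ((-2 * v p / rad p : ℝ) : ℍ[ℝ])) :
    ∀ p ∈ Ω, Lap (fun q => ((v q / rad q : ℝ) : ℍ[ℝ])) p = 0 := by
  intro p hp
  have hΩp : ∀ᶠ q in 𝓝 p, q ∈ Ω := hΩ.mem_nhds hp
  have hfp : ContDiffAt ℝ 2 f p := hf.contDiffAt hΩp
  have him_f : ∀ q ∈ Ω, im (f q) = (v q / rad q) • im q := fun q hq => by
    rw [hform q hq, im_ofReal_add_iot_mul_ofReal]
  have hcoeff : ∀ q ∈ Ω, imCoeff f q = v q / rad q := fun q hq =>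
    imCoeff_eq_of_im_eq_smul (hΩim q hq) (him_f q hq)
  have him : (fun q => im (f q)) =ᶠ[𝓝 p] fun q => imCoeff f q • im q := by
    filter_upwards [hΩp] with q hq
    rw [hcoeff q hq, him_f q hq]
  have hDlG : Dl f =ᶠ[𝓝 p] fun q => ((-2 * imCoeff f q : ℝ) : ℍ[ℝ]) := by
    filter_upwards [hΩp] with q hq
    rw [hDl q hq, hcoeff q hq, mul_div_assoc]
  have hvG : (fun q => ((v q / rad q : ℝ) : ℍ[ℝ])) =ᶠ[𝓝 p]
      fun q => algebraMapCLM ℝ ℍ[ℝ] (imCoeff f q) := by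
    filter_upwards [hΩp] with q hq
    rw [hcoeff q hq]
    rfl
  have hcoeff_smooth := hfp.imCoeff (hΩim p hp)
  rw [Lap_eq_quatLaplacian, hvG.quatLaplacian_eq, hcoeff_smooth.quatLaplacian_clm_comp,
    quatLaplacian_eq_zero_of_Dl_eq hfp hcoeff_smooth (hΩim p hp) him hDlG, map_zero]
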